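/- Define in ℂ[X_b : b ∈ (ℤ/3ℤ)²] the four polynomials (all sums over σ ∈ (ℤ/3ℤ)²): w₁ = Σ_σ X_{σ+(2,0)}³·X_σ·X_{σ+(0,1)}·X_{σ+(0,2)} − Σ_σ X_{σ+(1,0)}³·X_σ·X_{σ+(0,1)}·X_{σ+(0,2)}; w₂ = Σ_σ X_{σ+(0,2)}³·X_σ·X_{σ+(1,0)}·X_{σ+(2,0)} − Σ_σ X_{σ+(0,1)}³·X_σ·X_{σ+(1,0)}·X_{σ+(2,0)}; w₃ = Σ_σ X_{σ+(0,2)}³·X_σ·X_{σ+(1,1)}·X_{σ+(2,2)} − Σ_σ X_{σ+(0,1)}³·X_σ·X_{σ+(1,1)}·X_{σ+(2,2)}; w₄ = Σ_σ X_{σ+(2,0)}³·X_σ·X_{σ+(1,2)}·X_{σ+(2,1)} − Σ_σ X_{σ+(1,0)}³·X_σ·X_{σ+(1,2)}·X_{σ+(2,1)}. Then w₁, w₂, w₃, w₄ are linearly independent over ℂ, each w_k is Heisenberg-invariant, and each w_k is anti-invariant under the involution ι given by the substitution X_b ↦ X_{−b}, i.e. ι(w_k) = −w_k for k = 1,2,3,4.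 -/
import Mathlib


open MvPolynomial

/-- `ω = exp(2πi/3)`, a primitive cube root of unity. -/
noncomputable def omega : ℂ := Complex.exp (2 * Real.pi * Complex.I / 3)

/-- The index set `(ℤ/3)²` of the nine variables. -/
abbrev Idx : Type := ZMod 3 × ZMod 3

/-- Standard dot product on `(ℤ/3)²` with values in `ℤ/3`. -/
def pdot (a b : Idx) : ZMod 3 := a.1 * b.1 + a.2 * b.2

/-- The translation substitution `X_b ↦ X_{b+a}`. -/
noncomputable def trOp (a : Idx) : MvPolynomial Idx ℂ →ₐ[ℂ] MvPolynomial Idx ℂ :=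
  rename (· + a)

/-- The modulation substitution `X_b ↦ ω^{a*·b}·X_b`. -/
noncomputable def modOp (as : Idx) : MvPolynomial Idx ℂ →ₐ[ℂ] MvPolynomial Idx ℂ :=
  aeval fun b : Idx => C (omega ^ (pdot as b).val) * X b

/-- A polynomial is Heisenberg-invariant if it is fixed by all translation and
modulation substitutions. -/
def HeisenbergInvariant (P : MvPolynomial Idx ℂ) : Prop :=
  (∀ a : Idx, trOp a P = P) ∧ (∀ as : Idx, modOp as P = P)

/-- The involution `ι : X_b ↦ X_{−b}` induced by the inverse on the abelian
surface. -/
noncomputable def iotaOp : MvPolynomial Idx ℂ →ₐ[ℂ] MvPolynomial Idx ℂ :=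
  rename (fun b : Idx => -b)

noncomputable def w1 : MvPolynomial Idx ℂ :=
  (∑ σ : Idx, X (σ + (2, 0)) ^ 3 * X σ * X (σ + (0, 1)) * X (σ + (0, 2))) -
    ∑ σ : Idx, X (σ + (1, 0)) ^ 3 * X σ * X (σ + (0, 1)) * X (σ + (0, 2))

noncomputable def w2 : MvPolynomial Idx ℂ :=
  (∑ σ : Idx, X (σ + (0, 2)) ^ 3 * X σ * X (σ + (1, 0)) * X (σ + (2, 0))) -
    ∑ σ : Idx, X (σ + (0, 1)) ^ 3 * X σ * X (σ + (1, 0)) * X (σ + (2, 0))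

noncomputable def w3 : MvPolynomial Idx ℂ :=
  (∑ σ : Idx, X (σ + (0, 2)) ^ 3 * X σ * X (σ + (1, 1)) * X (σ + (2, 2))) -
    ∑ σ : Idx, X (σ + (0, 1)) ^ 3 * X σ * X (σ + (1, 1)) * X (σ + (2, 2))

noncomputable def w4 : MvPolynomial Idx ℂ :=
  (∑ σ : Idx, X (σ + (2, 0)) ^ 3 * X σ * X (σ + (1, 2)) * X (σ + (2, 1))) -
    ∑ σ : Idx, X (σ + (1, 0)) ^ 3 * X σ * X (σ + (1, 2)) * X (σ + (2, 1))

/-! ### Auxiliary material -/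

namespace Stmt16Aux

/-- The basic cyclic sum. -/
noncomputable def T (c1 c2 c3 : Idx) : MvPolynomial Idx ℂ :=
  ∑ σ : Idx, X (σ + c1) ^ 3 * X σ * X (σ + c2) * X (σ + c3)

lemma w1_eq : w1 = T (2,0) (0,1) (0,2) - T (1,0) (0,1) (0,2) := rfl
lemma w2_eq : w2 = T (0,2) (1,0) (2,0) - T (0,1) (1,0) (2,0) := rfl
lemma w3_eq : w3 = T (0,2) (1,1) (2,2) - T (0,1) (1,1) (2,2) := rfl
lemma w4_eq : w4 = T (2,0) (1,2) (2,1) - T (1,0) (1,2) (2,1) := rfl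

lemma omega_pow_three : omega ^ 3 = 1 := by
  unfold omega
  rw [← Complex.exp_nat_mul]
  rw [show ((3:ℕ) : ℂ) * (2 * Real.pi * Complex.I / 3) = 2 * Real.pi * Complex.I by
    push_cast; ring]
  exact Complex.exp_two_pi_mul_I

lemma omega_pow_mod (n : ℕ) : omega ^ (n % 3) = omega ^ n := by
  conv_rhs => rw [← Nat.div_add_mod n 3]
  rw [pow_add, pow_mul, omega_pow_three, one_pow, one_mul]

/-- The character `x ↦ ω^x` on `ℤ/3`. -/
noncomputable def chi (x : ZMod 3) : ℂ := omega ^ x.val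

lemma chi_zero : chi 0 = 1 := by simp [chi]

lemma chi_add (x y : ZMod 3) : chi (x + y) = chi x * chi y := by
  rw [chi, chi, chi, ZMod.val_add, omega_pow_mod, pow_add]

lemma chi_cube (x : ZMod 3) : chi x ^ 3 = 1 := by
  rw [chi, ← pow_mul, mul_comm, pow_mul, omega_pow_three, one_pow]

lemma pdot_add_right (a x y : Idx) : pdot a (x + y) = pdot a x + pdot a y := by
  simp only [pdot, Prod.fst_add, Prod.snd_add]; ring

lemma pdot_zero_right (a : Idx) : pdot a 0 = 0 := by
  simp [pdot]

lemma three_smul_zero (σ : Idx) : σ + σ + σ = 0 := by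
  have h : ∀ x : ZMod 3, x + x + x = 0 := by decide
  exact Prod.ext (h σ.1) (h σ.2)

/-- Translation invariance of the cyclic sums. -/
lemma trOp_T (a c1 c2 c3 : Idx) : trOp a (T c1 c2 c3) = T c1 c2 c3 := by
  unfold trOp T
  rw [map_sum]
  refine Fintype.sum_equiv (Equiv.addRight a) _ _ fun σ => ?_
  simp only [map_mul, map_pow, rename_X, Equiv.coe_addRight]
  rw [add_right_comm σ c1 a, add_right_comm σ c2 a, add_right_comm σ c3 a]

lemma modOp_X (as b : Idx) :
    modOp as (X b : MvPolynomial Idx ℂ) = C (chi (pdot as b)) * X b :=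
  aeval_X _ b

lemma mod_term (as a b c d : Idx) :
    modOp as (X a ^ 3 * X b * X c * X d : MvPolynomial Idx ℂ) =
      C (chi (pdot as b + pdot as c + pdot as d)) * (X a ^ 3 * X b * X c * X d) := by
  rw [map_mul, map_mul, map_mul, map_pow, modOp_X, modOp_X, modOp_X, modOp_X,
    chi_add, chi_add, C_mul, C_mul, mul_pow, ← C_pow, chi_cube, C_1]
  ring

/-- Modulation invariance of the cyclic sums, when `c2 + c3 = 0`. -/
lemma modOp_T (as c1 c2 c3 : Idx) (h : c2 + c3 = 0) : modOp as (T c1 c2 c3) = T c1 c2 c3 := by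
  unfold T
  rw [map_sum]
  refine Finset.sum_congr rfl fun σ _ => ?_
  rw [mod_term]
  have h1 : pdot as σ + pdot as (σ + c2) + pdot as (σ + c3) = 0 := by
    rw [← pdot_add_right, ← pdot_add_right,
      show σ + (σ + c2) + (σ + c3) = σ + σ + σ + (c2 + c3) by ring,
      three_smul_zero, zero_add, h, pdot_zero_right]
  rw [h1, chi_zero, C_1, one_mul]

/-- Behaviour of the cyclic sums under the involution. -/
lemma iotaOp_T (c1 c2 c3 : Idx) : iotaOp (T c1 c2 c3) = T (-c1) (-c2) (-c3) := by
  unfold iotaOp T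
  rw [map_sum]
  refine Fintype.sum_equiv (Equiv.neg Idx) _ _ fun σ => ?_
  simp only [map_mul, map_pow, rename_X, Equiv.neg_apply]
  rw [show -(σ + c1) = -σ + -c1 by ring, show -(σ + c2) = -σ + -c2 by ring,
    show -(σ + c3) = -σ + -c3 by ring]

lemma T_comm (c1 c2 c3 : Idx) : T c1 c2 c3 = T c1 c3 c2 := by
  unfold T
  exact Finset.sum_congr rfl fun σ _ => by ring

/-- Expansion of a sum over the nine indices. -/
lemma sumZ {M : Type*} [AddCommMonoid M] (g : ZMod 3 → M) :
    ∑ x, g x = g 0 + g 1 + g 2 :=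
  Fin.sum_univ_three g

lemma sum_idx {M : Type*} [AddCommMonoid M] (f : Idx → M) :
    ∑ σ : Idx, f σ =
      f (0,0) + f (0,1) + f (0,2) + f (1,0) + f (1,1) + f (1,2) +
        f (2,0) + f (2,1) + f (2,2) := by
  rw [Fintype.sum_prod_type, sumZ, sumZ, sumZ, sumZ]
  abel

/-- Indicator evaluation points. -/
noncomputable def v1 : Idx → ℂ := fun b =>
  if b = (0,0) ∨ b = (0,1) ∨ b = (0,2) ∨ b = (1,0) then 1 else 0
noncomputable def v2 : Idx → ℂ := fun b =>
  if b = (0,0) ∨ b = (0,1) ∨ b = (1,0) ∨ b = (2,0) then 1 else 0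
noncomputable def v3 : Idx → ℂ := fun b =>
  if b = (0,0) ∨ b = (0,1) ∨ b = (1,1) ∨ b = (2,2) then 1 else 0
noncomputable def v4 : Idx → ℂ := fun b =>
  if b = (0,0) ∨ b = (0,1) ∨ b = (1,0) ∨ b = (2,2) then 1 else 0

lemma aeval_T (v : Idx → ℂ) (c1 c2 c3 : Idx) :
    aeval v (T c1 c2 c3) = ∑ σ : Idx, v (σ + c1) ^ 3 * v σ * v (σ + c2) * v (σ + c3) := by
  unfold T
  rw [map_sum]
  exact Finset.sum_congr rfl fun σ _ => by simp [map_mul, map_pow, aeval_X]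

end Stmt16Aux

open Stmt16Aux in
/-- the four polynomials `w₁, w₂, w₃, w₄` are linearly
independent over `ℂ`, each is Heisenberg-invariant, and each is
anti-invariant under the involution `ι : X_b ↦ X_{−b}`. -/
theorem stmt_16 :
    LinearIndependent ℂ ![w1, w2, w3, w4] ∧
    (∀ k : Fin 4, HeisenbergInvariant (![w1, w2, w3, w4] k)) ∧
    (∀ k : Fin 4, iotaOp (![w1, w2, w3, w4] k) = -(![w1, w2, w3, w4] k)) := by
  have ev : ∀ (v : Idx → ℂ) (c1 c2 c3 : Idx),
      aeval v (T c1 c2 c3 - T (-c1) c2 c3) =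
        (∑ σ : Idx, v (σ + c1) ^ 3 * v σ * v (σ + c2) * v (σ + c3)) -
          ∑ σ : Idx, v (σ + -c1) ^ 3 * v σ * v (σ + c2) * v (σ + c3) := by
    intro v c1 c2 c3
    rw [map_sub, aeval_T, aeval_T]
  refine ⟨?_, ?_, ?_⟩
  · -- linear independence
    have hw : ∀ (v : Idx → ℂ) (g : Fin 4 → ℂ),
        (∑ i : Fin 4, g i • ![w1, w2, w3, w4] i) = 0 →
        g 0 * aeval v w1 + g 1 * aeval v w2 + g 2 * aeval v w3 + g 3 * aeval v w4 = 0 := by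
      intro v g hg
      have h := congrArg (aeval (R := ℂ) v) hg
      simp only [map_sum, map_add, map_smul, map_zero, Fin.sum_univ_four,
        Matrix.cons_val_zero, Matrix.cons_val_one, Matrix.head_cons, Matrix.cons_val_two,
        Matrix.tail_cons, Matrix.cons_val_three, smul_eq_mul] at h
      exact h
    have e1 : ∀ v : Idx → ℂ, aeval v w1 =
        (∑ σ : Idx, v (σ + (2,0)) ^ 3 * v σ * v (σ + (0,1)) * v (σ + (0,2))) -
          ∑ σ : Idx, v (σ + (1,0)) ^ 3 * v σ * v (σ + (0,1)) * v (σ + (0,2)) := by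
      intro v; rw [w1_eq, map_sub, aeval_T, aeval_T]
    have e2 : ∀ v : Idx → ℂ, aeval v w2 =
        (∑ σ : Idx, v (σ + (0,2)) ^ 3 * v σ * v (σ + (1,0)) * v (σ + (2,0))) -
          ∑ σ : Idx, v (σ + (0,1)) ^ 3 * v σ * v (σ + (1,0)) * v (σ + (2,0)) := by
      intro v; rw [w2_eq, map_sub, aeval_T, aeval_T]
    have e3 : ∀ v : Idx → ℂ, aeval v w3 =
        (∑ σ : Idx, v (σ + (0,2)) ^ 3 * v σ * v (σ + (1,1)) * v (σ + (2,2))) -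
          ∑ σ : Idx, v (σ + (0,1)) ^ 3 * v σ * v (σ + (1,1)) * v (σ + (2,2)) := by
      intro v; rw [w3_eq, map_sub, aeval_T, aeval_T]
    have e4 : ∀ v : Idx → ℂ, aeval v w4 =
        (∑ σ : Idx, v (σ + (2,0)) ^ 3 * v σ * v (σ + (1,2)) * v (σ + (2,1))) -
          ∑ σ : Idx, v (σ + (1,0)) ^ 3 * v σ * v (σ + (1,2)) * v (σ + (2,1)) := by
      intro v; rw [w4_eq, map_sub, aeval_T, aeval_T]
    -- numerical values
    have A11 : aeval v1 w1 = -1 := by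
      rw [e1 v1, sum_idx, sum_idx]
      simp (config := { decide := true }) only [v1]; norm_num
    have A12 : aeval v1 w2 = 0 := by
      rw [e2 v1, sum_idx, sum_idx]; simp (config := { decide := true }) only [v1]; norm_num
    have A13 : aeval v1 w3 = 0 := by
      rw [e3 v1, sum_idx, sum_idx]; simp (config := { decide := true }) only [v1]; norm_num
    have A14 : aeval v1 w4 = 0 := by
      rw [e4 v1, sum_idx, sum_idx]; simp (config := { decide := true }) only [v1]; norm_num
    have A21 : aeval v2 w1 = 0 := by
      rw [e1 v2, sum_idx, sum_idx]; simp (config := { decide := true }) only [v2]; norm_num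
    have A22 : aeval v2 w2 = -1 := by
      rw [e2 v2, sum_idx, sum_idx]; simp (config := { decide := true }) only [v2]; norm_num
    have A23 : aeval v2 w3 = 0 := by
      rw [e3 v2, sum_idx, sum_idx]; simp (config := { decide := true }) only [v2]; norm_num
    have A24 : aeval v2 w4 = 0 := by
      rw [e4 v2, sum_idx, sum_idx]; simp (config := { decide := true }) only [v2]; norm_num
    have A31 : aeval v3 w1 = 0 := by
      rw [e1 v3, sum_idx, sum_idx]; simp (config := { decide := true }) only [v3]; norm_num
    have A32 : aeval v3 w2 = 0 := by
      rw [e2 v3, sum_idx, sum_idx]; simp (config := { decide := true }) only [v3]; norm_num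
    have A33 : aeval v3 w3 = -1 := by
      rw [e3 v3, sum_idx, sum_idx]; simp (config := { decide := true }) only [v3]; norm_num
    have A34 : aeval v3 w4 = 0 := by
      rw [e4 v3, sum_idx, sum_idx]; simp (config := { decide := true }) only [v3]; norm_num
    have A41 : aeval v4 w1 = 0 := by
      rw [e1 v4, sum_idx, sum_idx]; simp (config := { decide := true }) only [v4]; norm_num
    have A42 : aeval v4 w2 = 0 := by
      rw [e2 v4, sum_idx, sum_idx]; simp (config := { decide := true }) only [v4]; norm_num
    have A43 : aeval v4 w3 = 0 := by
      rw [e3 v4, sum_idx, sum_idx]; simp (config := { decide := true }) only [v4]; norm_num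
    have A44 : aeval v4 w4 = 1 := by
      rw [e4 v4, sum_idx, sum_idx]; simp (config := { decide := true }) only [v4]; norm_num
    rw [Fintype.linearIndependent_iff]
    intro g hg
    have h1 := hw v1 g hg
    have h2 := hw v2 g hg
    have h3 := hw v3 g hg
    have h4 := hw v4 g hg
    rw [A11, A12, A13, A14] at h1
    rw [A21, A22, A23, A24] at h2
    rw [A31, A32, A33, A34] at h3
    rw [A41, A42, A43, A44] at h4
    have hg0 : g 0 = 0 := by linear_combination -h1
    have hg1 : g 1 = 0 := by linear_combination -h2
    have hg2 : g 2 = 0 := by linear_combination -h3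
    have hg3 : g 3 = 0 := by linear_combination h4
    intro i; fin_cases i <;> assumption
  · -- Heisenberg invariance
    have H : ∀ c1 c2 c3 c1' : Idx, c2 + c3 = 0 →
        HeisenbergInvariant (T c1 c2 c3 - T c1' c2 c3) := by
      intro c1 c2 c3 c1' h
      constructor
      · intro a; rw [map_sub, trOp_T, trOp_T]
      · intro a; rw [map_sub, modOp_T a _ _ _ h, modOp_T a _ _ _ h]
    intro k
    fin_cases k
    · show HeisenbergInvariant w1
      rw [w1_eq]; exact H _ _ _ _ (by decide)
    · show HeisenbergInvariant w2
      rw [w2_eq]; exact H _ _ _ _ (by decide)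
    · show HeisenbergInvariant w3
      rw [w3_eq]; exact H _ _ _ _ (by decide)
    · show HeisenbergInvariant w4
      rw [w4_eq]; exact H _ _ _ _ (by decide)
  · -- anti-invariance under iota
    intro k
    fin_cases k
    · show iotaOp w1 = -w1
      rw [w1_eq, map_sub, iotaOp_T, iotaOp_T,
        show -((2:ZMod 3),(0:ZMod 3)) = ((1:ZMod 3),(0:ZMod 3)) by decide,
        show -((1:ZMod 3),(0:ZMod 3)) = ((2:ZMod 3),(0:ZMod 3)) by decide,
        show -((0:ZMod 3),(1:ZMod 3)) = ((0:ZMod 3),(2:ZMod 3)) by decide,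
        show -((0:ZMod 3),(2:ZMod 3)) = ((0:ZMod 3),(1:ZMod 3)) by decide,
        T_comm (1,0), T_comm (2,0)]
      ring
    · show iotaOp w2 = -w2
      rw [w2_eq, map_sub, iotaOp_T, iotaOp_T,
        show -((0:ZMod 3),(2:ZMod 3)) = ((0:ZMod 3),(1:ZMod 3)) by decide,
        show -((0:ZMod 3),(1:ZMod 3)) = ((0:ZMod 3),(2:ZMod 3)) by decide,
        show -((1:ZMod 3),(0:ZMod 3)) = ((2:ZMod 3),(0:ZMod 3)) by decide,
        show -((2:ZMod 3),(0:ZMod 3)) = ((1:ZMod 3),(0:ZMod 3)) by decide,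
        T_comm (0,1), T_comm (0,2)]
      ring
    · show iotaOp w3 = -w3
      rw [w3_eq, map_sub, iotaOp_T, iotaOp_T,
        show -((0:ZMod 3),(2:ZMod 3)) = ((0:ZMod 3),(1:ZMod 3)) by decide,
        show -((0:ZMod 3),(1:ZMod 3)) = ((0:ZMod 3),(2:ZMod 3)) by decide,
        show -((1:ZMod 3),(1:ZMod 3)) = ((2:ZMod 3),(2:ZMod 3)) by decide,
        show -((2:ZMod 3),(2:ZMod 3)) = ((1:ZMod 3),(1:ZMod 3)) by decide,
        T_comm (0,1), T_comm (0,2)]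
      ring
    · show iotaOp w4 = -w4
      rw [w4_eq, map_sub, iotaOp_T, iotaOp_T,
        show -((2:ZMod 3),(0:ZMod 3)) = ((1:ZMod 3),(0:ZMod 3)) by decide,
        show -((1:ZMod 3),(0:ZMod 3)) = ((2:ZMod 3),(0:ZMod 3)) by decide,
        show -((1:ZMod 3),(2:ZMod 3)) = ((2:ZMod 3),(1:ZMod 3)) by decide,
        show -((2:ZMod 3),(1:ZMod 3)) = ((1:ZMod 3),(2:ZMod 3)) by decide,
        T_comm (1,0), T_comm (2,0)]
      ring
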